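/- arXiv:1304.0698 — 5 statements merged into one kernel-verified Lean document; each statement's English description precedes it below -/
import Mathlib

section
/- Let α ≤ β be countable ordinals, let X and Y be separable metrizable spaces, and let F : X → Y. Suppose there is a countable partition {Q_i}_{i∈ℕ} of X into Δ^0_{β+1}(X) sets and ordinals γ_i with γ_i + α ≤ β such that each restriction F↾Q_i is Σ^0_{γ_i+1}-measurable (with respect to the subspace topology on Q_i). Then F^{-1}(S) ∈ Σ^0_{β+1}(X) for every S ∈ Σ^0_{α+1}(Y). -/
open Set Function TopologicalSpace

/-- The Borel hierarchy on a topological space `X`: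
`SigmaSet X 1 s` iff `s` is open; for `α > 1`, `SigmaSet X α s` iff `s` is a countable
union `⋃ n, A n \ B n` where `A n` and `B n` are `SigmaSet X (β n)` for some `β n < α`. -/
inductive SigmaSet (X : Type*) [TopologicalSpace X] : Ordinal.{0} → Set X → Prop
  | isOpen {s : Set X} (hs : IsOpen s) : SigmaSet X 1 s
  | iUnion (α : Ordinal.{0}) (β : ℕ → Ordinal.{0}) (A B : ℕ → Set X)
      (hβ : ∀ n, β n < α)
      (hA : ∀ n, SigmaSet X (β n) (A n)) (hB : ∀ n, SigmaSet X (β n) (B n)) :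
      SigmaSet X α (⋃ n, A n \ B n)

/-- `Π⁰_α` sets: complements of `Σ⁰_α` sets. -/
def PiSet (X : Type*) [TopologicalSpace X] (α : Ordinal.{0}) (s : Set X) : Prop :=
  SigmaSet X α sᶜ

/-- `Δ⁰_α` sets. -/
def DeltaSet (X : Type*) [TopologicalSpace X] (α : Ordinal.{0}) (s : Set X) : Prop :=
  SigmaSet X α s ∧ PiSet X α s

/-- `F : X → Y` is `Σ⁰_α`-measurable. -/
def SigmaMeasurable {X Y : Type*} [TopologicalSpace X] [TopologicalSpace Y]
    (α : Ordinal.{0}) (F : X → Y) : Prop :=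
  ∀ U : Set Y, IsOpen U → SigmaSet X α (F ⁻¹' U)

/-- The restriction of `F : X → Y` to `Q ⊆ X` is `Σ⁰_α`-measurable with respect to the
subspace topology on `Q`. -/
def SigmaMeasurableOn {X Y : Type*} [TopologicalSpace X] [TopologicalSpace Y]
    (α : Ordinal.{0}) (F : X → Y) (Q : Set X) : Prop :=
  SigmaMeasurable α (Q.restrict F)

/-- A countable partition of a type `X` (pieces may be empty). -/
def IsCountablePartition {X : Type*} (Q : ℕ → Set X) : Prop :=
  (⋃ i, Q i) = Set.univ ∧ Pairwise (Disjoint on Q)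

/-- An ordinal is countable. -/
def Ordinal.IsCountable (α : Ordinal.{0}) : Prop := α.card ≤ Cardinal.aleph0

lemma sig_pos {X : Type*} [TopologicalSpace X] {θ : Ordinal.{0}} {S : Set X}
    (h : SigmaSet X θ S) : 1 ≤ θ := by
  induction h with
  | isOpen hs => exact le_rfl
  | iUnion α β A B hβ hA hB ihA ihB => exact (ihA 0).trans (hβ 0).le

lemma sig_empty {X : Type*} [TopologicalSpace X] {θ : Ordinal.{0}} (hθ : 1 ≤ θ) :
    SigmaSet X θ (∅ : Set X) := by
  rcases eq_or_lt_of_le hθ with h1 | h1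
  · rw [← h1]; exact .isOpen isOpen_empty
  · have he : (∅ : Set X) = ⋃ _ : ℕ, (∅ : Set X) \ ∅ := by simp
    rw [he]
    exact .iUnion θ (fun _ => 1) _ _ (fun _ => h1) (fun _ => .isOpen isOpen_empty)
      (fun _ => .isOpen isOpen_empty)

lemma sig_mono {X : Type*} [TopologicalSpace X] {θ₁ θ₂ : Ordinal.{0}} {S : Set X}
    (h : SigmaSet X θ₁ S) (h12 : θ₁ ≤ θ₂) : SigmaSet X θ₂ S := by
  rcases eq_or_lt_of_le h12 with h1 | h1
  · rwa [← h1]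
  · have he : S = ⋃ _ : ℕ, S \ ∅ := by simp only [diff_empty, iUnion_const]
    rw [he]
    exact .iUnion θ₂ (fun _ => θ₁) _ _ (fun _ => h1) (fun _ => h) (fun _ => sig_empty (sig_pos h))

lemma sig_open {X : Type*} [TopologicalSpace X] {S : Set X} (h : SigmaSet X 1 S) : IsOpen S := by
  cases h with
  | isOpen hs => exact hs
  | iUnion α β A B hβ hA hB => exact absurd (hβ 0) (not_lt.2 (sig_pos (hA 0)))

lemma sig_decomp {X : Type*} [TopologicalSpace X] {θ : Ordinal.{0}} {S : Set X}
    (h : SigmaSet X θ S) (hθ : 1 < θ) :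
    ∃ (β : ℕ → Ordinal.{0}) (A B : ℕ → Set X), (∀ n, β n < θ) ∧
      (∀ n, SigmaSet X (β n) (A n)) ∧ (∀ n, SigmaSet X (β n) (B n)) ∧ S = ⋃ n, A n \ B n := by
  cases h with
  | isOpen hs => exact absurd hθ (lt_irrefl 1)
  | iUnion α β A B hβ hA hB => exact ⟨β, A, B, hβ, hA, hB, rfl⟩

lemma sig_iUnion {X : Type*} [TopologicalSpace X] {θ : Ordinal.{0}} (hθ : 1 ≤ θ) {T : ℕ → Set X}
    (hT : ∀ i, SigmaSet X θ (T i)) : SigmaSet X θ (⋃ i, T i) := by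
  rcases eq_or_lt_of_le hθ with h1 | h1
  · rw [← h1]
    rw [← h1] at hT
    exact .isOpen (isOpen_iUnion fun i => sig_open (hT i))
  · choose β A B hβ hA hB hEq using fun i => sig_decomp (hT i) h1
    set e : ℕ ≃ ℕ × ℕ := Nat.pairEquiv.symm with he
    have key : (⋃ i, T i) = ⋃ k, A (e k).1 (e k).2 \ B (e k).1 (e k).2 := by
      ext x
      simp only [mem_iUnion]
      constructor
      · rintro ⟨i, hx⟩
        rw [hEq i] at hx
        obtain ⟨n, hx⟩ := mem_iUnion.mp hx
        exact ⟨e.symm (i, n), by simpa using hx⟩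
      · rintro ⟨k, hx⟩
        refine ⟨(e k).1, ?_⟩
        rw [hEq (e k).1]
        exact mem_iUnion.mpr ⟨(e k).2, hx⟩
    rw [key]
    exact .iUnion θ _ _ _ (fun k => hβ _ _) (fun k => hA _ _) (fun k => hB _ _)

lemma sig_union2 {X : Type*} [TopologicalSpace X] {θ : Ordinal.{0}} {S T : Set X}
    (hS : SigmaSet X θ S) (hT : SigmaSet X θ T) : SigmaSet X θ (S ∪ T) := by
  have he : S ∪ T = ⋃ i : ℕ, (if i = 0 then S else T) := by
    ext x
    simp only [mem_union, mem_iUnion]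
    constructor
    · rintro (h | h)
      exacts [⟨0, by simp [h]⟩, ⟨1, by simp [h]⟩]
    · rintro ⟨i, h⟩
      split_ifs at h
      exacts [Or.inl h, Or.inr h]
  rw [he]
  refine sig_iUnion (sig_pos hS) fun i => ?_
  by_cases hi : i = 0
  · simpa [hi] using hS
  · simpa [hi] using hT

lemma sig_inter {X : Type*} [TopologicalSpace X] (θ : Ordinal.{0}) :
    ∀ S T : Set X, SigmaSet X θ S → SigmaSet X θ T → SigmaSet X θ (S ∩ T) := by
  induction θ using Ordinal.induction with
  | h θ IH =>
  intro S T hS hT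
  rcases eq_or_lt_of_le (sig_pos hS) with h1 | h1
  · rw [← h1] at hS hT ⊢
    exact .isOpen ((sig_open hS).inter (sig_open hT))
  · obtain ⟨β, A, B, hβ, hA, hB, hSeq⟩ := sig_decomp hS h1
    obtain ⟨β', C, D, hβ', hC, hD, hTeq⟩ := sig_decomp hT h1
    set e : ℕ ≃ ℕ × ℕ := Nat.pairEquiv.symm with he
    have key : S ∩ T = ⋃ k, (A (e k).1 ∩ C (e k).2) \ (B (e k).1 ∪ D (e k).2) := by
      rw [hSeq, hTeq]
      ext x
      simp only [mem_inter_iff, mem_iUnion, mem_diff, mem_union]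
      constructor
      · rintro ⟨⟨n, hxA, hxB⟩, ⟨m, hxC, hxD⟩⟩
        refine ⟨e.symm (n, m), ?_⟩
        simp only [Equiv.apply_symm_apply]
        exact ⟨⟨hxA, hxC⟩, by tauto⟩
      · rintro ⟨k, ⟨hxA, hxC⟩, hx⟩
        push_neg at hx
        exact ⟨⟨_, hxA, hx.1⟩, ⟨_, hxC, hx.2⟩⟩
    rw [key]
    refine .iUnion θ (fun k => max (β (e k).1) (β' (e k).2)) _ _
      (fun k => max_lt (hβ _) (hβ' _)) (fun k => ?_) (fun k => ?_)
    · exact IH _ (max_lt (hβ _) (hβ' _)) _ _ (sig_mono (hA _) (le_max_left _ _))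
        (sig_mono (hC _) (le_max_right _ _))
    · exact sig_union2 (sig_mono (hB _) (le_max_left _ _)) (sig_mono (hD _) (le_max_right _ _))

lemma sig_subspace {X : Type*} [TopologicalSpace X] {Q : Set X} {θ : Ordinal.{0}} {R : Set ↥Q}
    (h : SigmaSet ↥Q θ R) :
    ∃ R' : Set X, SigmaSet X θ R' ∧ Subtype.val '' R = Q ∩ R' := by
  induction h with
  | isOpen hs =>
    obtain ⟨U, hU, hUR⟩ := isOpen_induced_iff.mp hs
    exact ⟨U, .isOpen hU, by rw [← hUR, Subtype.image_preimage_coe]⟩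
  | iUnion α β A B hβ hA hB ihA ihB =>
    choose A' hA' hAim using ihA
    choose B' hB' hBim using ihB
    refine ⟨⋃ n, A' n \ B' n, .iUnion α β A' B' hβ hA' hB', ?_⟩
    have him : ∀ n, Subtype.val '' (A n \ B n) = (Q ∩ A' n) \ (Q ∩ B' n) := fun n => by
      rw [Set.image_diff Subtype.val_injective, hAim, hBim]
    rw [image_iUnion]
    simp_rw [him]
    ext x
    simp only [mem_iUnion, mem_diff, mem_inter_iff]
    constructor
    · rintro ⟨n, ⟨hxQ, hxA⟩, hxB⟩
      exact ⟨hxQ, n, hxA, fun hb => hxB ⟨hxQ, hb⟩⟩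
    · rintro ⟨hxQ, n, hxA, hxB⟩
      exact ⟨n, ⟨hxQ, hxA⟩, fun hb => hxB hb.2⟩

lemma sig_comp {Z Y : Type*} [TopologicalSpace Z] [TopologicalSpace Y] {G : Z → Y}
    {γ : Ordinal.{0}} (hG : SigmaMeasurable (γ + 1) G) {θ : Ordinal.{0}} {S : Set Y}
    (h : SigmaSet Y θ S) : SigmaSet Z (γ + θ) (G ⁻¹' S) := by
  induction h with
  | isOpen hs => exact hG _ hs
  | iUnion α β A B hβ hA hB ihA ihB =>
    rw [preimage_iUnion]
    simp_rw [preimage_diff]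
    exact .iUnion (γ + α) (fun n => γ + β n) _ _
      (fun n => add_lt_add_right (hβ n) γ) ihA ihB

/-- If `F : X → Y` between separable metrizable spaces is decomposable along a countable
partition into `Δ⁰_{β+1}` sets on each of which it is `Σ⁰_{γᵢ+1}`-measurable with
`γᵢ + α ≤ β`, then preimages of `Σ⁰_{α+1}` sets under `F` are `Σ⁰_{β+1}`. -/
theorem sigmaSet_preimage_of_decomposable {X Y : Type*}
    [TopologicalSpace X] [TopologicalSpace.MetrizableSpace X] [TopologicalSpace.SeparableSpace X]
    [TopologicalSpace Y] [TopologicalSpace.MetrizableSpace Y] [TopologicalSpace.SeparableSpace Y]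
    (α β : Ordinal.{0}) (hα : α.IsCountable) (hβ : β.IsCountable) (hαβ : α ≤ β)
    (F : X → Y) (Q : ℕ → Set X) (γ : ℕ → Ordinal.{0})
    (hQ : IsCountablePartition Q)
    (hQΔ : ∀ i, DeltaSet X (β + 1) (Q i))
    (hγ : ∀ i, γ i + α ≤ β)
    (hmeas : ∀ i, SigmaMeasurableOn (γ i + 1) F (Q i)) :
    ∀ S : Set Y, SigmaSet Y (α + 1) S → SigmaSet X (β + 1) (F ⁻¹' S) := by
  intro S hS
  have hβ1 : (1 : Ordinal) ≤ β + 1 := by simpa using add_le_add_right (Ordinal.zero_le β) 1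
  have key : ∀ i, SigmaSet X (β + 1) (Q i ∩ F ⁻¹' S) := by
    intro i
    have h1 : SigmaSet ↥(Q i) (γ i + (α + 1)) (((Q i).restrict F) ⁻¹' S) :=
      sig_comp (hmeas i) hS
    obtain ⟨R', hR', himg⟩ := sig_subspace h1
    have h2 : Q i ∩ F ⁻¹' S = Q i ∩ R' := by
      rw [← himg]
      have hre : ((Q i).restrict F) ⁻¹' S = Subtype.val ⁻¹' (F ⁻¹' S) := rfl
      rw [hre, Subtype.image_preimage_coe]
    rw [h2]
    have hlev : γ i + (α + 1) ≤ β + 1 := by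
      rw [← add_assoc]
      exact add_le_add_left (hγ i) 1
    exact sig_inter (β + 1) _ _ ((hQΔ i).1) (sig_mono hR' hlev)
  have hcov : F ⁻¹' S = ⋃ i, Q i ∩ F ⁻¹' S := by
    ext x
    simp only [mem_iUnion, mem_inter_iff, mem_preimage]
    constructor
    · intro hx
      have hxu : x ∈ ⋃ i, Q i := hQ.1 ▸ mem_univ x
      obtain ⟨i, hi⟩ := mem_iUnion.mp hxu
      exact ⟨i, hi, hx⟩
    · rintro ⟨i, _, hx⟩
      exact hx
  rw [hcov]
  exact sig_iUnion hβ1 key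
end

section
/- Let α and γ be countable ordinals and let F : X → Y be a Σ^0_{γ+1}-measurable function between separable metrizable spaces. Then F^{-1}(S) ∈ Σ^0_{γ+α+1}(X) for every S ∈ Σ^0_{α+1}(Y). -/
open Set Function TopologicalSpace

/-- A `Σ⁰_{γ+1}`-measurable function between separable metrizable spaces pulls back
`Σ⁰_{α+1}` sets to `Σ⁰_{γ+α+1}` sets. -/
theorem sigmaSet_preimage_of_sigmaMeasurable {X Y : Type*}
    [TopologicalSpace X] [TopologicalSpace.MetrizableSpace X] [TopologicalSpace.SeparableSpace X]
    [TopologicalSpace Y] [TopologicalSpace.MetrizableSpace Y] [TopologicalSpace.SeparableSpace Y]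
    (α γ : Ordinal.{0}) (hα : α.IsCountable) (hγ : γ.IsCountable)
    (F : X → Y) (hF : SigmaMeasurable (γ + 1) F) :
    ∀ S : Set Y, SigmaSet Y (α + 1) S → SigmaSet X (γ + α + 1) (F ⁻¹' S) := by
  have key : ∀ (ξ : Ordinal.{0}) (S : Set Y), SigmaSet Y ξ S →
      SigmaSet X (γ + ξ) (F ⁻¹' S) := by
    intro ξ S h
    induction h with
    | isOpen hs => exact hF _ hs
    | iUnion δ β A B hβ hA hB ihA ihB =>
      rw [preimage_iUnion]
      simp only [preimage_diff]
      exact SigmaSet.iUnion _ (fun n => γ + β n) _ _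
        (fun n => (add_lt_add_iff_left γ).2 (hβ n)) ihA ihB
  intro S hS
  have := key (α + 1) S hS
  rwa [← add_assoc] at this
end

section
/- Let α ≥ 1 be a countable ordinal, let X be a second-countable topological space, let Y be a Polish space, let A ⊆ X, and let F : A → Y be a function such that for every open U ⊆ Y there is S ∈ Σ^0_α(X) with F^{-1}(U) = S ∩ A. Then there exist a set D ∈ Π^0_{α+1}(X) with A ⊆ D ⊆ X and a function G : D → Y extending F such that for every open U ⊆ Y there is S ∈ Σ^0_α(X) with G^{-1}(U) = S ∩ D. -/
open Set Function TopologicalSpace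

theorem SigmaSet.one_le' {X : Type*} [TopologicalSpace X] {β : Ordinal.{0}} {s : Set X}
    (h : SigmaSet X β s) : 1 ≤ β := by
  induction h with
  | isOpen _ => exact le_refl 1
  | iUnion α βf A B hβ hA hB ihA ihB => exact le_of_lt (lt_of_le_of_lt (ihA 0) (hβ 0))

theorem sigmaSet_empty {X : Type*} [TopologicalSpace X] {α : Ordinal.{0}} (h : 1 ≤ α) :
    SigmaSet X α (∅ : Set X) := by
  rcases eq_or_lt_of_le h with h1 | h1
  · rw [← h1]; exact .isOpen isOpen_empty
  · have he : (∅ : Set X) = ⋃ _ : ℕ, (∅ : Set X) \ ∅ := by simp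
    rw [he]
    exact .iUnion α (fun _ => 1) _ _ (fun _ => h1) (fun _ => .isOpen isOpen_empty)
      (fun _ => .isOpen isOpen_empty)

theorem SigmaSet.mono {X : Type*} [TopologicalSpace X] {α β : Ordinal.{0}} {s : Set X}
    (h : SigmaSet X α s) (hab : α ≤ β) : SigmaSet X β s := by
  rcases eq_or_lt_of_le hab with h1 | h1
  · rwa [← h1]
  · have hs : s = ⋃ _ : ℕ, s \ ∅ := by simp [iUnion_const]
    rw [hs]
    exact .iUnion β (fun _ => α) _ _ (fun _ => h1) (fun _ => h)
      (fun _ => sigmaSet_empty h.one_le')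

theorem SigmaSet.isOpen_of_one {X : Type*} [TopologicalSpace X] {s : Set X}
    (h : SigmaSet X 1 s) : IsOpen s := by
  cases h with
  | isOpen hs => exact hs
  | iUnion _ βf A B hβ hA hB =>
      exact absurd (lt_of_le_of_lt (hA 0).one_le' (hβ 0)) (lt_irrefl 1)

theorem SigmaSet.decomp {X : Type*} [TopologicalSpace X] {α : Ordinal.{0}} {s : Set X}
    (h : SigmaSet X α s) (h1 : 1 < α) :
    ∃ (β : ℕ → Ordinal.{0}) (A B : ℕ → Set X), (∀ n, β n < α) ∧
      (∀ n, SigmaSet X (β n) (A n)) ∧ (∀ n, SigmaSet X (β n) (B n)) ∧ s = ⋃ n, A n \ B n := by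
  cases h with
  | isOpen hs => exact absurd h1 (lt_irrefl 1)
  | iUnion _ βf A B hβ hA hB => exact ⟨βf, A, B, hβ, hA, hB, rfl⟩

theorem sigmaSet_iUnion_nat {X : Type*} [TopologicalSpace X] {α : Ordinal.{0}} (h1 : 1 ≤ α)
    {f : ℕ → Set X} (hf : ∀ n, SigmaSet X α (f n)) : SigmaSet X α (⋃ n, f n) := by
  rcases eq_or_lt_of_le h1 with he | he
  · rw [← he] at hf ⊢
    exact .isOpen (isOpen_iUnion fun n => (hf n).isOpen_of_one)
  · choose β A B hβ hA hB hfeq using fun n => (hf n).decomp he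
    let e : ℕ ≃ ℕ × ℕ := (Denumerable.eqv (ℕ × ℕ)).symm
    have hs : (⋃ n, f n) = ⋃ j : ℕ, A (e j).1 (e j).2 \ B (e j).1 (e j).2 := by
      ext x
      simp only [mem_iUnion, hfeq]
      constructor
      · rintro ⟨n, m, hx⟩
        refine ⟨e.symm (n, m), ?_⟩
        rw [Equiv.apply_symm_apply]
        exact hx
      · rintro ⟨j, hx⟩
        exact ⟨(e j).1, (e j).2, hx⟩
    rw [hs]
    exact .iUnion α (fun j => β (e j).1 (e j).2) _ _ (fun j => hβ _ _)
      (fun j => hA _ _) (fun j => hB _ _)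

theorem sigmaSet_iUnion_denum {X : Type*} [TopologicalSpace X] {ι : Type} [Denumerable ι]
    {α : Ordinal.{0}} (h1 : 1 ≤ α) {f : ι → Set X} (hf : ∀ i, SigmaSet X α (f i)) :
    SigmaSet X α (⋃ i, f i) := by
  let e : ℕ ≃ ι := (Denumerable.eqv ι).symm
  rw [← e.surjective.iUnion_comp (g := f)]
  exact sigmaSet_iUnion_nat h1 fun n => hf (e n)

theorem sigmaSet_union {X : Type*} [TopologicalSpace X] {α : Ordinal.{0}} (h1 : 1 ≤ α)
    {s t : Set X} (hs : SigmaSet X α s) (ht : SigmaSet X α t) : SigmaSet X α (s ∪ t) := by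
  have he : s ∪ t = ⋃ n : ℕ, if n = 0 then s else t := by
    ext x
    simp only [mem_iUnion, mem_union]
    constructor
    · rintro (h | h)
      exacts [⟨0, by simp [h]⟩, ⟨1, by simp [h]⟩]
    · rintro ⟨n, h⟩
      by_cases hn : n = 0 <;> simp [hn] at h <;> tauto
  rw [he]
  refine sigmaSet_iUnion_nat h1 fun n => ?_
  by_cases hn : n = 0
  · simpa [hn] using hs
  · simpa [hn] using ht

theorem sigmaSet_inter {X : Type*} [TopologicalSpace X] :
    ∀ (α : Ordinal.{0}) (s t : Set X),
      SigmaSet X α s → SigmaSet X α t → SigmaSet X α (s ∩ t) := by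
  intro α
  induction α using Ordinal.induction with
  | h α IH =>
    intro s t hs ht
    rcases eq_or_lt_of_le hs.one_le' with he | he
    · subst he
      exact .isOpen (hs.isOpen_of_one.inter ht.isOpen_of_one)
    · obtain ⟨β, A, B, hβ, hA, hB, rfl⟩ := hs.decomp he
      obtain ⟨γ, C, Dd, hγ, hC, hD, rfl⟩ := ht.decomp he
      let e : ℕ ≃ ℕ × ℕ := (Denumerable.eqv (ℕ × ℕ)).symm
      have key : ((⋃ n, A n \ B n) ∩ ⋃ n, C n \ Dd n)
          = ⋃ j : ℕ, (A (e j).1 ∩ C (e j).2) \ (B (e j).1 ∪ Dd (e j).2) := by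
        ext x
        simp only [mem_inter_iff, mem_iUnion, mem_diff, mem_union]
        constructor
        · rintro ⟨⟨n, hxa, hxb⟩, ⟨m, hxc, hxd⟩⟩
          refine ⟨e.symm (n, m), ?_⟩
          rw [Equiv.apply_symm_apply]
          exact ⟨⟨hxa, hxc⟩, fun h => h.elim hxb hxd⟩
        · rintro ⟨j, ⟨hxa, hxc⟩, hnd⟩
          exact ⟨⟨(e j).1, hxa, fun h => hnd (Or.inl h)⟩,
            ⟨(e j).2, hxc, fun h => hnd (Or.inr h)⟩⟩
      rw [key]
      refine .iUnion α (fun j => max (β (e j).1) (γ (e j).2)) _ _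
        (fun j => max_lt (hβ _) (hγ _)) (fun j => ?_) (fun j => ?_)
      · exact IH _ (max_lt (hβ _) (hγ _)) _ _ ((hA _).mono (le_max_left _ _))
          ((hC _).mono (le_max_right _ _))
      · exact sigmaSet_union (le_trans (hB (e j).1).one_le' (le_max_left _ _))
          ((hB _).mono (le_max_left _ _)) ((hD _).mono (le_max_right _ _))

theorem SigmaSet.diff {X : Type*} [TopologicalSpace X] {α : Ordinal.{0}} {s t : Set X}
    (hs : SigmaSet X α s) (ht : SigmaSet X α t) : SigmaSet X (α + 1) (s \ t) := by
  have he : s \ t = ⋃ _ : ℕ, s \ t := (iUnion_const _).symm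
  rw [he]
  exact .iUnion (α + 1) (fun _ => α) _ _
    (fun _ => by rw [Ordinal.add_one_eq_succ]; exact Order.lt_succ α)
    (fun _ => hs) (fun _ => ht)

theorem SigmaSet.compl_succ {X : Type*} [TopologicalSpace X] {α : Ordinal.{0}} {s : Set X}
    (h : SigmaSet X α s) : SigmaSet X (α + 1) sᶜ := by
  rw [compl_eq_univ_diff]
  exact ((SigmaSet.isOpen isOpen_univ).mono h.one_le').diff h

/-- **Extension lemma.** A function `F` defined on `A ⊆ X` (with `X` second countable and
`Y` Polish) whose preimages of open sets are traces of `Σ⁰_α` sets on `A` extends to a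
function `G` with the same property whose domain `D ⊇ A` is `Π⁰_{α+1}`. -/
theorem extension_lemma {X Y : Type*}
    [TopologicalSpace X] [SecondCountableTopology X]
    [TopologicalSpace Y] [PolishSpace Y]
    (α : Ordinal.{0}) (hα1 : 1 ≤ α) (hα : α.IsCountable)
    (A : Set X) (F : ↥A → Y)
    (hF : ∀ U : Set Y, IsOpen U → ∃ S : Set X, SigmaSet X α S ∧
      ∀ x : ↥A, F x ∈ U ↔ (x : X) ∈ S) :
    ∃ D : Set X, PiSet X (α + 1) D ∧ A ⊆ D ∧
      ∃ G : ↥D → Y,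
        (∀ (x : X) (hxA : x ∈ A) (hxD : x ∈ D), G ⟨x, hxD⟩ = F ⟨x, hxA⟩) ∧
        ∀ U : Set Y, IsOpen U → ∃ S : Set X, SigmaSet X α S ∧
          ∀ x : ↥D, G x ∈ U ↔ (x : X) ∈ S := by
  classical
  have hsucc : (1 : Ordinal.{0}) ≤ α + 1 := hα1.trans (le_self_add (a := α) (b := 1))
  by_cases hY : IsEmpty Y
  · refine ⟨∅, ?_, ?_, fun x => absurd x.2 (notMem_empty _), ?_, ?_⟩
    · show SigmaSet X (α + 1) (∅ : Set X)ᶜ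
      rw [compl_empty]
      exact (SigmaSet.isOpen isOpen_univ).mono hsucc
    · intro x hx
      exact (hY.false (F ⟨x, hx⟩)).elim
    · intro x hxA hxD
      exact absurd hxD (notMem_empty x)
    · intro U hU
      exact ⟨∅, sigmaSet_empty hα1, fun x => absurd x.2 (notMem_empty _)⟩
  · rw [not_isEmpty_iff] at hY
    letI := upgradeIsCompletelyMetrizable Y
    haveI := hY
    set c : ℕ → Y := TopologicalSpace.denseSeq Y with hc
    have hcd : DenseRange c := TopologicalSpace.denseRange_denseSeq Y
    choose S hSσ hSmem using fun k n : ℕ =>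
      hF (Metric.ball (c n) ((1/2 : ℝ)^k / 4)) Metric.isOpen_ball
    set U : ℕ → ℕ → Set X := fun k n => ⋃ m, if m < n then S k m else ∅ with hUdef
    have hUσ : ∀ k n, SigmaSet X α (U k n) := by
      intro k n
      rw [hUdef]
      refine sigmaSet_iUnion_nat hα1 fun m => ?_
      by_cases h : m < n
      · simpa [h] using hSσ k m
      · simpa [h] using sigmaSet_empty (X := X) hα1
    have hUmem : ∀ k n x, x ∈ U k n ↔ ∃ m, m < n ∧ x ∈ S k m := by
      intro k n x
      rw [hUdef]
      simp only [mem_iUnion]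
      constructor
      · rintro ⟨m, hm⟩
        by_cases h : m < n
        · rw [if_pos h] at hm; exact ⟨m, h, hm⟩
        · rw [if_neg h] at hm; exact absurd hm (notMem_empty _)
      · rintro ⟨m, h, hm⟩
        exact ⟨m, by rw [if_pos h]; exact hm⟩
    set T : ℕ → ℕ → Set X := fun k n => S k n \ U k n with hTdef
    set Wb : Set X := (⋃ k, (⋃ n, S k n)ᶜ) ∪
      (⋃ q : ℕ × ℕ × ℕ × ℕ,
        if Disjoint (Metric.ball (c q.2.1) ((1/2 : ℝ)^q.1 / 4))
            (Metric.ball (c q.2.2.2) ((1/2 : ℝ)^q.2.2.1 / 4))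
        then S q.1 q.2.1 ∩ T q.2.2.1 q.2.2.2 else ∅) with hWdef
    set D : Set X := Wbᶜ with hDdef
    -- Π⁰_{α+1}-ness
    have hWσ : SigmaSet X (α + 1) Wb := by
      rw [hWdef]
      refine sigmaSet_union hsucc ?_ ?_
      · exact sigmaSet_iUnion_nat hsucc fun k =>
          (sigmaSet_iUnion_nat hα1 fun n => hSσ k n).compl_succ
      · refine sigmaSet_iUnion_denum hsucc fun q => ?_
        by_cases hb : Disjoint (Metric.ball (c q.2.1) ((1/2 : ℝ)^q.1 / 4))
            (Metric.ball (c q.2.2.2) ((1/2 : ℝ)^q.2.2.1 / 4))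
        · rw [if_pos hb]
          have heq : S q.1 q.2.1 ∩ T q.2.2.1 q.2.2.2
              = (S q.1 q.2.1 ∩ S q.2.2.1 q.2.2.2) \ U q.2.2.1 q.2.2.2 := by
            rw [hTdef]
            ext z
            simp only [mem_inter_iff, mem_diff]
            tauto
          rw [heq]
          exact (sigmaSet_inter α _ _ (hSσ _ _) (hSσ _ _)).diff (hUσ _ _)
        · rw [if_neg hb]
          exact sigmaSet_empty hsucc
    -- A ⊆ D
    have hAD : A ⊆ D := by
      intro x hx
      rw [hDdef, mem_compl_iff, hWdef]
      intro hmem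
      rcases hmem with h | h
      · obtain ⟨k, hk⟩ := mem_iUnion.mp h
        obtain ⟨n, hn⟩ := hcd.exists_dist_lt (F ⟨x, hx⟩)
          (by positivity : (0:ℝ) < (1/2 : ℝ)^k / 4)
        exact hk (mem_iUnion.mpr ⟨n, (hSmem k n ⟨x, hx⟩).mp (Metric.mem_ball.mpr hn)⟩)
      · obtain ⟨⟨k, n, k', m⟩, hq⟩ := mem_iUnion.mp h
        by_cases hb : Disjoint (Metric.ball (c n) ((1/2 : ℝ)^k / 4))
            (Metric.ball (c m) ((1/2 : ℝ)^k' / 4))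
        · rw [if_pos hb] at hq
          have h1 : F ⟨x, hx⟩ ∈ Metric.ball (c n) ((1/2 : ℝ)^k / 4) :=
            (hSmem k n ⟨x, hx⟩).mpr hq.1
          have h2 : F ⟨x, hx⟩ ∈ Metric.ball (c m) ((1/2 : ℝ)^k' / 4) :=
            (hSmem k' m ⟨x, hx⟩).mpr hq.2.1
          exact (Set.disjoint_left.mp hb h1) h2
        · rw [if_neg hb] at hq
          exact hq
    -- membership facts for D
    have hD0 : ∀ x ∈ D, ∀ k, ∃ n, x ∈ S k n := by
      intro x hx k
      by_contra hcon
      push_neg at hcon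
      rw [hDdef, mem_compl_iff, hWdef] at hx
      apply hx
      refine Or.inl (mem_iUnion.mpr ⟨k, ?_⟩)
      rw [mem_compl_iff, mem_iUnion]
      push_neg
      exact hcon
    have hDE : ∀ x ∈ D, ∀ k n k' m, x ∈ S k n → x ∈ T k' m →
        ¬ Disjoint (Metric.ball (c n) ((1/2 : ℝ)^k / 4))
          (Metric.ball (c m) ((1/2 : ℝ)^k' / 4)) := by
      intro x hx k n k' m h1 h2 hdisj
      rw [hDdef, mem_compl_iff, hWdef] at hx
      apply hx
      refine Or.inr (mem_iUnion.mpr ⟨(k, n, k', m), ?_⟩)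
      rw [if_pos hdisj]
      exact ⟨h1, h2⟩
    -- minimal indices
    have hfind : ∀ x : ↥D, ∀ k, ∃ n, (x : X) ∈ S k n ∧ ∀ m, m < n → (x : X) ∉ S k m := by
      intro x k
      have h := hD0 x x.2 k
      exact ⟨Nat.find h, Nat.find_spec h, fun m hm => Nat.find_min h hm⟩
    choose nk hnk1 hnk2 using hfind
    have hnkT : ∀ (x : ↥D) (k : ℕ), (x : X) ∈ T k (nk x k) := by
      intro x k
      rw [hTdef]
      refine ⟨hnk1 x k, fun hu => ?_⟩
      obtain ⟨m, hm, hms⟩ := (hUmem k (nk x k) x).mp hu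
      exact hnk2 x k m hm hms
    -- consecutive witnesses
    have hcons : ∀ (x : ↥D) (k : ℕ), ∃ z : Y,
        z ∈ Metric.ball (c (nk x k)) ((1/2 : ℝ)^k / 4) ∧
        z ∈ Metric.ball (c (nk x (k+1))) ((1/2 : ℝ)^(k+1) / 4) := by
      intro x k
      exact Set.not_disjoint_iff.mp
        (hDE x x.2 k (nk x k) (k+1) (nk x (k+1)) (hnk1 x k) (hnkT x (k+1)))
    choose y hy1 hy2 using hcons
    have hydist : ∀ (x : ↥D) (k : ℕ), dist (y x k) (y x (k+1)) ≤ (1/4 : ℝ) * (1/2)^k := by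
      intro x k
      have h1 := Metric.mem_ball.mp (hy2 x k)
      have h2 := Metric.mem_ball.mp (hy1 x (k+1))
      have ht := dist_triangle_right (y x k) (y x (k+1)) (c (nk x (k+1)))
      rw [pow_succ] at h1 h2
      linarith
    have hCau : ∀ x : ↥D, ∃ L, Filter.Tendsto (y x) Filter.atTop (nhds L) := fun x =>
      cauchySeq_tendsto_of_complete
        (cauchySeq_of_le_geometric (1/2) (1/4) (by norm_num) (hydist x))
    choose G hG using hCau
    have hGy : ∀ (x : ↥D) (k : ℕ), dist (y x k) (G x) ≤ (1/2 : ℝ)^k / 2 := by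
      intro x k
      have h := dist_le_of_le_geometric_of_tendsto (1/2) (1/4) (by norm_num)
        (hydist x) (hG x) k
      calc dist (y x k) (G x) ≤ 1/4 * (1/2 : ℝ)^k / (1 - 1/2) := h
        _ = (1/2 : ℝ)^k / 2 := by ring
    have hGnear : ∀ (x : ↥D) (k : ℕ), dist (G x) (c (nk x k)) ≤ (1/2 : ℝ)^k := by
      intro x k
      have h1 := Metric.mem_ball.mp (hy1 x k)
      have h2 := hGy x k
      have ht := dist_triangle (G x) (y x k) (c (nk x k))
      rw [dist_comm (G x) (y x k)] at ht
      have hpos : (0:ℝ) ≤ (1/2 : ℝ)^k := by positivity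
      linarith
    have hclose : ∀ (x : ↥D) (k n : ℕ), (x : X) ∈ S k n →
        dist (G x) (c n) ≤ (1/2 : ℝ)^k / 4 := by
      intro x k n hxS
      refine le_of_forall_pos_le_add ?_
      intro δ hδ
      obtain ⟨k', hk'⟩ := exists_pow_lt_of_lt_one (by positivity : (0:ℝ) < δ / 2)
        (by norm_num : (1/2 : ℝ) < 1)
      obtain ⟨z, hz1, hz2⟩ := Set.not_disjoint_iff.mp
        (hDE x x.2 k n k' (nk x k') hxS (hnkT x k'))
      have t1 := dist_triangle (G x) z (c n)
      have t2 := dist_triangle (G x) (y x k') z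
      have h3 := hGy x k'
      have h4 : dist (y x k') z ≤ (1/2 : ℝ)^k' / 2 := by
        have a1 := Metric.mem_ball.mp (hy1 x k')
        have a2 := Metric.mem_ball.mp hz2
        have tt := dist_triangle_right (y x k') z (c (nk x k'))
        linarith
      have h5 := Metric.mem_ball.mp hz1
      have h6 : dist (G x) (y x k') = dist (y x k') (G x) := dist_comm _ _
      linarith
    -- extension property
    have hext : ∀ (x : X) (hxA : x ∈ A) (hxD : x ∈ D), G ⟨x, hxD⟩ = F ⟨x, hxA⟩ := by
      intro x hxA hxD
      refine tendsto_nhds_unique (hG ⟨x, hxD⟩) ?_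
      rw [Metric.tendsto_atTop]
      intro δ hδ
      obtain ⟨K, hK⟩ := exists_pow_lt_of_lt_one (by positivity : (0:ℝ) < δ / 2)
        (by norm_num : (1/2 : ℝ) < 1)
      refine ⟨K, fun k hk => ?_⟩
      have hFS : F ⟨x, hxA⟩ ∈ Metric.ball (c (nk ⟨x, hxD⟩ k)) ((1/2 : ℝ)^k / 4) :=
        (hSmem k _ ⟨x, hxA⟩).mpr (hnk1 ⟨x, hxD⟩ k)
      have a1 := Metric.mem_ball.mp (hy1 ⟨x, hxD⟩ k)
      have a2 := Metric.mem_ball.mp hFS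
      have t := dist_triangle_right (y ⟨x, hxD⟩ k) (F ⟨x, hxA⟩) (c (nk ⟨x, hxD⟩ k))
      have hmono : (1/2 : ℝ)^k ≤ (1/2 : ℝ)^K :=
        pow_le_pow_of_le_one (by norm_num) (by norm_num) hk
      linarith
    -- measurability
    have hmeas : ∀ U' : Set Y, IsOpen U' → ∃ Sg : Set X, SigmaSet X α Sg ∧
        ∀ x : ↥D, G x ∈ U' ↔ (x : X) ∈ Sg := by
      intro U' hU'
      refine ⟨⋃ p : ℕ × ℕ,
        if Metric.closedBall (c p.2) ((1/2 : ℝ)^p.1) ⊆ U' then S p.1 p.2 else ∅, ?_, ?_⟩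
      · refine sigmaSet_iUnion_denum hα1 fun p => ?_
        by_cases h : Metric.closedBall (c p.2) ((1/2 : ℝ)^p.1) ⊆ U'
        · rw [if_pos h]; exact hSσ p.1 p.2
        · rw [if_neg h]; exact sigmaSet_empty hα1
      · intro x
        constructor
        · intro hGU
          obtain ⟨δ, hδ, hball⟩ := Metric.isOpen_iff.mp hU' (G x) hGU
          obtain ⟨k, hk⟩ := exists_pow_lt_of_lt_one (by positivity : (0:ℝ) < δ / 2)
            (by norm_num : (1/2 : ℝ) < 1)
          refine mem_iUnion.mpr ⟨(k, nk x k), ?_⟩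
          have hsub : Metric.closedBall (c (nk x k)) ((1/2 : ℝ)^k) ⊆ U' := by
            intro z hz
            apply hball
            rw [Metric.mem_ball]
            have h1 := Metric.mem_closedBall.mp hz
            have h2 := hGnear x k
            have ht := dist_triangle z (c (nk x k)) (G x)
            rw [dist_comm (c (nk x k)) (G x)] at ht
            linarith
          rw [if_pos hsub]
          exact hnk1 x k
        · intro hxS
          obtain ⟨⟨k, n⟩, hp⟩ := mem_iUnion.mp hxS
          by_cases h : Metric.closedBall (c n) ((1/2 : ℝ)^k) ⊆ U'
          · rw [if_pos h] at hp
            apply h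
            rw [Metric.mem_closedBall]
            have hcl := hclose x k n hp
            have hpos : (0:ℝ) < (1/2 : ℝ)^k := by positivity
            linarith
          · rw [if_neg h] at hp
            exact absurd hp (notMem_empty _)
    refine ⟨D, ?_, hAD, G, hext, hmeas⟩
    show SigmaSet X (α + 1) Dᶜ
    rw [hDdef, compl_compl]
    exact hWσ
end

section
/- Let α ≥ 1 be a countable ordinal, let X be a second-countable topological space, let Y be a Polish space, let A ⊆ X, and let F : A → Y be a function such that for every open U ⊆ Y there is S ∈ Σ^0_α(X) with F^{-1}(U) = S ∩ A. Then there exists a set P ∈ Π^0_α(X × Y) such that the graph of F equals P ∩ (A × Y), i.e., for all (x,y) ∈ A × Y one has (x,y) ∈ P if and only if y = F(x). -/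
open Set Function TopologicalSpace

lemma sigmaSet_one_le {X : Type*} [TopologicalSpace X] {γ : Ordinal.{0}} {s : Set X}
    (h : SigmaSet X γ s) : 1 ≤ γ := by
  induction h with
  | isOpen hs => exact le_refl _
  | iUnion α β A B hβ hA hB ihA ihB => exact le_of_lt (lt_of_le_of_lt (ihA 0) (hβ 0))

lemma sigmaSet_one_iff {X : Type*} [TopologicalSpace X] {s : Set X} :
    SigmaSet X 1 s ↔ IsOpen s := by
  constructor
  · intro h
    cases h with
    | isOpen hs => exact hs
    | iUnion α β A B hβ hA hB =>
        exact absurd (hβ 0) (not_lt.2 (sigmaSet_one_le (hA 0)))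
  · exact SigmaSet.isOpen

lemma sigmaSet_gt_one {X : Type*} [TopologicalSpace X] {α : Ordinal.{0}} {s : Set X}
    (h : SigmaSet X α s) (hα : 1 < α) :
    ∃ (β : ℕ → Ordinal.{0}) (A B : ℕ → Set X), (∀ n, β n < α) ∧
      (∀ n, SigmaSet X (β n) (A n)) ∧ (∀ n, SigmaSet X (β n) (B n)) ∧
      s = ⋃ n, A n \ B n := by
  cases h with
  | isOpen hs => exact absurd hα (lt_irrefl 1)
  | iUnion α β A B hβ hA hB => exact ⟨β, A, B, hβ, hA, hB, rfl⟩

lemma sigmaSet_iUnion' {X : Type*} [TopologicalSpace X] {α : Ordinal.{0}} (hα : 1 ≤ α)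
    (s : ℕ → Set X) (h : ∀ n, SigmaSet X α (s n)) : SigmaSet X α (⋃ n, s n) := by
  rcases eq_or_lt_of_le hα with h1 | h1
  · rw [← h1] at h ⊢
    exact SigmaSet.isOpen (isOpen_iUnion fun n => sigmaSet_one_iff.1 (h n))
  · choose β A B hβ hA hB hs using fun n => sigmaSet_gt_one (h n) h1
    let e : ℕ ≃ ℕ × ℕ := (Denumerable.eqv (ℕ × ℕ)).symm
    have key : (⋃ n, s n) = ⋃ k, A (e k).1 (e k).2 \ B (e k).1 (e k).2 := by
      have : (⋃ n, s n) = ⋃ p : ℕ × ℕ, A p.1 p.2 \ B p.1 p.2 := by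
        ext x
        simp only [mem_iUnion, hs, Prod.exists]
      exact this.trans (e.surjective.iUnion_comp (fun p => A p.1 p.2 \ B p.1 p.2)).symm
    rw [key]
    exact SigmaSet.iUnion α (fun k => β (e k).1 (e k).2) _ _ (fun k => hβ _ _)
      (fun k => hA _ _) (fun k => hB _ _)

lemma sigmaSet_prod_open {X Y : Type*} [TopologicalSpace X] [TopologicalSpace Y]
    {α : Ordinal.{0}} {S : Set X} (h : SigmaSet X α S) {V : Set Y} (hV : IsOpen V) :
    SigmaSet (X × Y) α (S ×ˢ V) := by
  induction h with
  | isOpen hs => exact SigmaSet.isOpen (hs.prod hV)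
  | iUnion α β A B hβ hA hB ihA ihB =>
    have key : (⋃ n, A n \ B n) ×ˢ V = ⋃ n, (A n ×ˢ V) \ (B n ×ˢ V) := by
      ext ⟨x, y⟩
      simp only [mem_prod, mem_iUnion, mem_diff]
      aesop
    rw [key]
    exact SigmaSet.iUnion α β _ _ hβ ihA ihB

/-- A function `F` defined on `A ⊆ X` (with `X` second countable and `Y` Polish) whose
preimages of open sets are traces of `Σ⁰_α` sets on `A` has a graph which is the trace on
`A × Y` of a `Π⁰_α` subset of `X × Y`. -/
theorem graph_pi_of_sigma_measurable {X Y : Type*}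
    [TopologicalSpace X] [SecondCountableTopology X]
    [TopologicalSpace Y] [PolishSpace Y]
    (α : Ordinal.{0}) (hα1 : 1 ≤ α) (hα : α.IsCountable)
    (A : Set X) (F : ↥A → Y)
    (hF : ∀ U : Set Y, IsOpen U → ∃ S : Set X, SigmaSet X α S ∧
      ∀ x : ↥A, F x ∈ U ↔ (x : X) ∈ S) :
    ∃ P : Set (X × Y), PiSet (X × Y) α P ∧
      ∀ (x : ↥A) (y : Y), ((x : X), y) ∈ P ↔ y = F x := by
  letI := upgradeIsCompletelyMetrizable Y
  -- enumerate a countable basis of Y (with ∅ added so the set is nonempty)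
  obtain ⟨f, hf⟩ : ∃ f : ℕ → Set Y, insert ∅ (countableBasis Y) = Set.range f :=
    Set.Countable.exists_eq_range ((countable_countableBasis Y).insert ∅)
      (insert_nonempty _ _)
  have hfopen : ∀ n, IsOpen (f n) := by
    intro n
    have : f n ∈ insert ∅ (countableBasis Y) := hf ▸ Set.mem_range_self n
    rcases this with h | h
    · rw [h]; exact isOpen_empty
    · exact isOpen_of_mem_countableBasis h
  -- choose Σ⁰_α sets tracing the preimages of (closure (f n))ᶜ
  choose S hS hSmem using fun n =>
    hF (closure (f n))ᶜ (isClosed_closure.isOpen_compl)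
  refine ⟨(⋃ n, S n ×ˢ f n)ᶜ, ?_, ?_⟩
  · unfold PiSet
    rw [compl_compl]
    exact sigmaSet_iUnion' hα1 _ fun n => sigmaSet_prod_open (hS n) (hfopen n)
  · intro x y
    simp only [mem_compl_iff, mem_iUnion, mem_prod, not_exists, not_and]
    constructor
    · intro h
      by_contra hne
      have hd : 0 < dist y (F x) := dist_pos.2 hne
      obtain ⟨V, hVb, hyV, hVsub⟩ :=
        (isBasis_countableBasis Y).exists_subset_of_mem_open
          (Metric.mem_ball_self (by linarith : (0:ℝ) < dist y (F x) / 2))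
          Metric.isOpen_ball
      have : V ∈ Set.range f := hf ▸ Set.mem_insert_of_mem _ hVb
      obtain ⟨n, rfl⟩ := this
      have hFx : (x : X) ∉ S n := fun hx => h n hx hyV
      have hclo : F x ∈ closure (f n) := by
        by_contra hc
        exact hFx ((hSmem n x).1 hc)
      have hcb : F x ∈ Metric.closedBall y (dist y (F x) / 2) :=
        Metric.closure_ball_subset_closedBall ((closure_mono hVsub) hclo)
      rw [Metric.mem_closedBall, dist_comm] at hcb
      linarith
    · intro hy n hxS hyf
      have : F x ∈ (closure (f n))ᶜ := (hSmem n x).2 hxS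
      exact this (subset_closure (hy ▸ hyf))
end

section
/- There exists a bijection h : ℕ^ℕ → ℝ from Baire space onto the real line such that there is a countable partition of ℕ^ℕ into Δ^0_2(ℕ^ℕ) sets on each of which h is continuous, and there is a countable partition of ℝ into Δ^0_3(ℝ) sets on each of which h^{-1} is continuous (i.e., h is a level 3/2 Borel isomorphism between ℕ^ℕ and ℝ). -/
open Set Function TopologicalSpace

/-- `h : ℕ^ℕ → X` is a level `3/2` Borel isomorphism: a bijection such that `ℕ^ℕ` has a
countable partition into `Δ⁰₂` sets on each of which `h` is continuous, and `X` has a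
countable partition into `Δ⁰₃` sets on each of which `h⁻¹` is continuous. -/
def IsLevel32Iso {X : Type*} [TopologicalSpace X] (h : (ℕ → ℕ) → X) : Prop :=
  Function.Bijective h ∧
  (∃ P : ℕ → Set (ℕ → ℕ), IsCountablePartition P ∧
    ∀ i, DeltaSet (ℕ → ℕ) 2 (P i) ∧ ContinuousOn h (P i)) ∧
  (∃ Q : ℕ → Set X, IsCountablePartition Q ∧
    ∀ i, DeltaSet X 3 (Q i) ∧ ContinuousOn (Function.invFun h) (Q i))


open scoped Classical

namespace L32
noncomputable section

/-- partial digit sums -/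
def sfun (x : ℕ → ℕ) (n : ℕ) : ℕ := ∑ k ∈ Finset.range (n+1), (x k + 1)

lemma sfun_ge (x : ℕ → ℕ) (n : ℕ) : n + 1 ≤ sfun x n := by
  have : ∑ k ∈ Finset.range (n+1), 1 ≤ ∑ k ∈ Finset.range (n+1), (x k + 1) :=
    Finset.sum_le_sum fun i _ => Nat.le_add_left 1 (x i)
  simpa [sfun] using this

lemma sfun_zero (x : ℕ → ℕ) : sfun x 0 = x 0 + 1 := by simp [sfun]

lemma sfun_succ (x : ℕ → ℕ) (n : ℕ) :
    sfun x (n+1) = (x 0 + 1) + sfun (fun k => x (k+1)) n := by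
  have := Finset.sum_range_succ' (fun k => x k + 1) (n+1)
  simp only [sfun]
  omega

/-- the map to (0,1] -/
def g (x : ℕ → ℕ) : ℝ := ∑' n, (1/2:ℝ) ^ sfun x n

lemma term_le (x : ℕ → ℕ) (n : ℕ) : (1/2:ℝ) ^ sfun x n ≤ (1/2:ℝ)^(n+1) :=
  pow_le_pow_of_le_one (by norm_num) (by norm_num) (sfun_ge x n)

lemma summable_g (x : ℕ → ℕ) : Summable (fun n => (1/2:ℝ) ^ sfun x n) := by
  refine Summable.of_nonneg_of_le (fun n => by positivity) (term_le x) ?_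
  exact (summable_geometric_of_lt_one (by norm_num) (by norm_num)).comp_injective
    (add_left_injective 1) |>.congr (fun n => rfl)

lemma tsum_half_pow : ∑' n : ℕ, (1/2:ℝ)^(n+1) = 1 := by
  have h : ∑' n : ℕ, (1/2:ℝ)^n = 2 := by
    rw [tsum_geometric_of_lt_one (by norm_num) (by norm_num)]; norm_num
  calc ∑' n : ℕ, (1/2:ℝ)^(n+1) = ∑' n : ℕ, (1/2:ℝ) * (1/2:ℝ)^n := by
        refine tsum_congr fun n => by ring
    _ = (1/2:ℝ) * ∑' n : ℕ, (1/2:ℝ)^n := tsum_mul_left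
    _ = 1 := by rw [h]; norm_num

lemma summable_half_pow : Summable (fun n : ℕ => (1/2:ℝ)^(n+1)) := by
  exact (summable_geometric_of_lt_one (by norm_num) (by norm_num)).comp_injective
    (add_left_injective 1) |>.congr (fun n => rfl)

lemma g_pos (x : ℕ → ℕ) : 0 < g x :=
  lt_of_lt_of_le (by positivity : (0:ℝ) < (1/2:ℝ)^ sfun x 0)
    (Summable.le_tsum (summable_g x) 0 (fun j _ => by positivity))

lemma g_le_one (x : ℕ → ℕ) : g x ≤ 1 := by
  calc g x ≤ ∑' n : ℕ, (1/2:ℝ)^(n+1) :=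
        Summable.tsum_le_tsum (term_le x) (summable_g x) summable_half_pow
    _ = 1 := tsum_half_pow

lemma g_mem (x : ℕ → ℕ) : g x ∈ Ioc (0:ℝ) 1 := ⟨g_pos x, g_le_one x⟩

lemma g_rec (x : ℕ → ℕ) :
    g x = (1/2:ℝ)^(x 0 + 1) * (1 + g (fun k => x (k+1))) := by
  have h0 := Summable.tsum_eq_zero_add (summable_g x)
  have h1 : ∑' n : ℕ, (1/2:ℝ) ^ sfun x (n+1)
      = (1/2:ℝ)^(x 0 + 1) * g (fun k => x (k+1)) := by
    calc ∑' n : ℕ, (1/2:ℝ) ^ sfun x (n+1)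
        = ∑' n : ℕ, (1/2:ℝ)^(x 0 + 1) * (1/2:ℝ) ^ sfun (fun k => x (k+1)) n := by
          refine tsum_congr fun n => by rw [sfun_succ, pow_add]
      _ = (1/2:ℝ)^(x 0 + 1) * g (fun k => x (k+1)) := tsum_mul_left
  rw [g, h0, h1, sfun_zero]; ring


lemma exists_pow_lt {y : ℝ} (hy : 0 < y) : ∃ n : ℕ, (1/2:ℝ)^(n+1) < y := by
  obtain ⟨n, hn⟩ := exists_pow_lt_of_lt_one hy (by norm_num : (1/2:ℝ) < 1)
  exact ⟨n, lt_of_le_of_lt (pow_le_pow_of_le_one (by norm_num) (by norm_num) (Nat.le_succ n)) hn⟩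

def d (y : ℝ) : ℕ := if h : ∃ n : ℕ, (1/2:ℝ)^(n+1) < y then Nat.find h else 0

lemma d_eq {y : ℝ} {n : ℕ} (h1 : (1/2:ℝ)^(n+1) < y) (h2 : y ≤ (1/2:ℝ)^n) : d y = n := by
  have hex : ∃ m : ℕ, (1/2:ℝ)^(m+1) < y := ⟨n, h1⟩
  rw [d, dif_pos hex, Nat.find_eq_iff]
  refine ⟨h1, fun m hm => ?_⟩
  push_neg
  calc y ≤ (1/2:ℝ)^n := h2
    _ ≤ (1/2:ℝ)^(m+1) := pow_le_pow_of_le_one (by norm_num) (by norm_num) hm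

lemma d_spec {y : ℝ} (hy : y ∈ Ioc (0:ℝ) 1) :
    (1/2:ℝ)^(d y + 1) < y ∧ y ≤ (1/2:ℝ)^(d y) := by
  have hex := exists_pow_lt hy.1
  rw [d, dif_pos hex]
  refine ⟨Nat.find_spec hex, ?_⟩
  rcases Nat.eq_zero_or_pos (Nat.find hex) with h | h
  · rw [h]; simpa using hy.2
  · have := Nat.find_min hex (m := Nat.find hex - 1) (by omega)
    push_neg at this
    calc y ≤ (1/2:ℝ)^(Nat.find hex - 1 + 1) := this
      _ = (1/2:ℝ)^(Nat.find hex) := by congr 1; omega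

def R (y : ℝ) : ℝ := y * 2^(d y + 1) - 1

lemma R_mem {y : ℝ} (hy : y ∈ Ioc (0:ℝ) 1) : R y ∈ Ioc (0:ℝ) 1 := by
  obtain ⟨h1, h2⟩ := d_spec hy
  have hp : (0:ℝ) < 2^(d y + 1) := by positivity
  constructor
  · have : (1:ℝ) < y * 2^(d y + 1) := by
      have := mul_lt_mul_of_pos_right h1 hp
      calc (1:ℝ) = (1/2:ℝ)^(d y+1) * 2^(d y+1) := by
            rw [div_pow, one_pow]; field_simp
        _ < y * 2^(d y + 1) := this
    simp only [R]; linarith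
  · have : y * 2^(d y + 1) ≤ 2 := by
      have := mul_le_mul_of_nonneg_right h2 hp.le
      calc y * 2^(d y+1) ≤ (1/2:ℝ)^(d y) * 2^(d y+1) := this
        _ = 2 := by rw [div_pow, one_pow, pow_succ]; field_simp
    simp only [R]; linarith

/-- explicit inverse of g on (0,1] -/
def G (y : ℝ) (k : ℕ) : ℕ := d (R^[k] y)

lemma G_zero (y : ℝ) : G y 0 = d y := rfl
lemma G_succ (y : ℝ) (k : ℕ) : G y (k+1) = G (R y) k := by
  simp [G, Function.iterate_succ_apply]


lemma d_g (x : ℕ → ℕ) : d (g x) = x 0 := by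
  have ht := g_mem (fun k => x (k+1))
  have hrec := g_rec x
  refine d_eq ?_ ?_
  · rw [hrec]
    have : (0:ℝ) < (1/2:ℝ)^(x 0 + 1) := by positivity
    nlinarith [ht.1]
  · rw [hrec]
    have h2 : (1/2:ℝ)^(x 0) = (1/2:ℝ)^(x 0 + 1) * 2 := by rw [pow_succ]; ring
    have : (0:ℝ) < (1/2:ℝ)^(x 0 + 1) := by positivity
    nlinarith [ht.2]

lemma half_mul_two (m : ℕ) : ((1:ℝ)/2)^m * 2^m = 1 := by
  rw [div_pow, one_pow]; field_simp

lemma R_g (x : ℕ → ℕ) : R (g x) = g (fun k => x (k+1)) := by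
  rw [R, d_g, g_rec x]
  linear_combination (1 + g (fun k => x (k+1))) * half_mul_two (x 0 + 1)

lemma iter_g (k : ℕ) : ∀ x : ℕ → ℕ, R^[k] (g x) = g (fun n => x (n + k)) := by
  induction k with
  | zero =>
    intro x
    simp only [Function.iterate_zero, id_eq, add_zero]
  | succ k ih =>
    intro x
    have hx : (fun n => (fun m => x (m+1)) (n + k)) = (fun n => x (n + (k+1))) := by
      funext n; rfl
    rw [Function.iterate_succ_apply, R_g, ih (fun n => x (n+1)), hx]

lemma G_g (x : ℕ → ℕ) : G (g x) = x := by
  funext k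
  have h1 : G (g x) k = d (R^[k] (g x)) := rfl
  rw [h1, iter_g k x, d_g]
  simp

lemma g_injective : Function.Injective g := fun x y h => by
  rw [← G_g x, ← G_g y, h]

lemma G_cons (y : ℝ) : g (G y) = (1/2:ℝ)^(d y + 1) * (1 + g (G (R y))) := by
  have h0 : G y 0 = d y := rfl
  have ht : (fun k => G y (k+1)) = G (R y) := by
    funext k; rw [G_succ]
  rw [g_rec (G y), h0, ht]

lemma y_rec (y : ℝ) : y = (1/2:ℝ)^(d y + 1) * (1 + R y) := by
  rw [R]
  linear_combination (-y) * half_mul_two (d y + 1)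

lemma approx (N : ℕ) : ∀ y ∈ Ioc (0:ℝ) 1, |g (G y) - y| ≤ (1/2:ℝ)^N := by
  induction N with
  | zero =>
    intro y hy
    have h1 := g_mem (G y)
    rw [pow_zero, abs_sub_le_iff]
    constructor
    · nlinarith [h1.1, h1.2, hy.1, hy.2]
    · nlinarith [h1.1, h1.2, hy.1, hy.2]
  | succ N ih =>
    intro y hy
    have hR := R_mem hy
    have hih := ih (R y) hR
    have hkey : g (G y) - y = (1/2:ℝ)^(d y + 1) * (g (G (R y)) - R y) := by
      linear_combination G_cons y - y_rec y
    rw [hkey, abs_mul, abs_of_pos (by positivity : (0:ℝ) < (1/2:ℝ)^(d y + 1))]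
    have hle : (1/2:ℝ)^(d y + 1) ≤ (1/2:ℝ)^1 :=
      pow_le_pow_of_le_one (by norm_num) (by norm_num) (by omega)
    calc (1/2:ℝ)^(d y + 1) * |g (G (R y)) - R y| ≤ (1/2:ℝ)^1 * (1/2:ℝ)^N :=
          mul_le_mul hle hih (abs_nonneg _) (by norm_num)
      _ = (1/2:ℝ)^(N+1) := by rw [← pow_add]; ring_nf

lemma g_G {y : ℝ} (hy : y ∈ Ioc (0:ℝ) 1) : g (G y) = y := by
  have h : |g (G y) - y| = 0 := by
    by_contra hne
    have hpos : 0 < |g (G y) - y| := lt_of_le_of_ne (abs_nonneg _) (Ne.symm hne)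
    obtain ⟨n, hn⟩ := exists_pow_lt_of_lt_one hpos (by norm_num : (1/2:ℝ) < 1)
    exact absurd (approx n y hy) (not_le.mpr hn)
  have := abs_eq_zero.mp h
  linarith

lemma continuous_g : Continuous g := by
  apply continuous_tsum (u := fun n => (1/2:ℝ)^(n+1))
  · intro n
    have hs : Continuous (fun x : ℕ → ℕ => sfun x n) := by
      apply continuous_finset_sum
      intro k _
      exact (continuous_apply k : Continuous fun x : ℕ → ℕ => x k).add continuous_const
    exact (continuous_of_discreteTopology (f := fun m : ℕ => (1/2:ℝ)^m)).comp hs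
  · exact summable_half_pow
  · intro n x
    rw [Real.norm_eq_abs, abs_of_pos (by positivity)]
    exact term_le x n

/-- dyadic rationals -/
def Dy : Set ℝ := {y | ∃ z : ℤ, ∃ n : ℕ, y = z / 2^n}

lemma int_mem_Dy (z : ℤ) : (z:ℝ) ∈ Dy := ⟨z, 0, by norm_num⟩

lemma pow_mem_Dy (n : ℕ) : ((1:ℝ)/2)^n ∈ Dy := ⟨1, n, by rw [div_pow, one_pow]; norm_num⟩

lemma Dy_int_shift {y : ℝ} (z : ℤ) (h : y + z ∈ Dy) : y ∈ Dy := by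
  obtain ⟨w, n, hw⟩ := h
  refine ⟨w - z * 2^n, n, ?_⟩
  have h2n : (2:ℝ)^n ≠ 0 := by positivity
  field_simp at hw
  push_cast
  rw [eq_div_iff h2n]
  linear_combination hw

lemma R_notDy {y : ℝ} (h : y ∉ Dy) : R y ∉ Dy := by
  intro hR
  apply h
  obtain ⟨z, n, hz⟩ := hR
  have hz' : y * 2^(d y + 1) - 1 = (z:ℝ)/2^n := by rw [← hz]; rfl
  have h2n : (2:ℝ)^n ≠ 0 := by positivity
  field_simp at hz'
  refine ⟨z + 2^n, n + (d y + 1), ?_⟩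
  push_cast
  rw [eq_div_iff (by positivity : (2:ℝ)^(n + (d y + 1)) ≠ 0), pow_add]
  linear_combination hz'

lemma d_loc {y : ℝ} (hy : y ∈ Ioc (0:ℝ) 1) (hd : y ∉ Dy) :
    ∀ᶠ y' in nhds y, d y' = d y := by
  obtain ⟨h1, h2⟩ := d_spec hy
  have h2' : y < (1/2:ℝ)^(d y) := lt_of_le_of_ne h2 (fun he => hd (he ▸ pow_mem_Dy (d y)))
  have hmem : y ∈ Ioo ((1/2:ℝ)^(d y + 1)) ((1/2:ℝ)^(d y)) := ⟨h1, h2'⟩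
  filter_upwards [Ioo_mem_nhds h1 h2'] with y' hy'
  exact d_eq hy'.1 hy'.2.le

lemma RIoc_mem {y : ℝ} (hy : y ∈ Ioc (0:ℝ) 1) (hd : y ∉ Dy) (k : ℕ) :
    ContinuousAt (R^[k]) y ∧ R^[k] y ∈ Ioc (0:ℝ) 1 ∧ R^[k] y ∉ Dy := by
  induction k with
  | zero => exact ⟨continuousAt_id, hy, hd⟩
  | succ k ih =>
    obtain ⟨hc, hm, hnd⟩ := ih
    have hcR : ContinuousAt R (R^[k] y) := by
      have hloc := d_loc hm hnd
      have hcont : ContinuousAt (fun y' => y' * 2^(d (R^[k] y) + 1) - 1) (R^[k] y) := by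
        fun_prop
      apply hcont.congr
      filter_upwards [hloc] with y' hy'
      rw [R, hy']
    refine ⟨?_, ?_, ?_⟩
    · rw [Function.iterate_succ']
      exact hcR.comp hc
    · rw [Function.iterate_succ_apply']
      exact R_mem hm
    · rw [Function.iterate_succ_apply']
      exact R_notDy hnd

lemma G_loc {y : ℝ} (hy : y ∈ Ioc (0:ℝ) 1) (hd : y ∉ Dy) (k : ℕ) :
    ∀ᶠ y' in nhds y, G y' k = G y k := by
  obtain ⟨hc, hm, hnd⟩ := RIoc_mem hy hd k
  filter_upwards [hc.eventually (d_loc hm hnd)] with y' hy'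
  exact hy'

def ι : ℕ ≃ ℤ := (Denumerable.eqv ℤ).symm

/-- The level 3/2 isomorphism. -/
def hmap (x : ℕ → ℕ) : ℝ := (ι (x 0) : ℝ) + g (fun n => x (n+1))

/-- Its inverse. -/
def Hmap (y : ℝ) : ℕ → ℕ := fun k =>
  Nat.casesOn k (ι.symm (⌈y⌉ - 1)) (fun j => G (y - ((⌈y⌉ - 1 : ℤ) : ℝ)) j)

lemma frac_mem (y : ℝ) : y - ((⌈y⌉ - 1 : ℤ) : ℝ) ∈ Ioc (0:ℝ) 1 := by
  have h1 := Int.le_ceil y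
  have h2 := Int.ceil_lt_add_one y
  constructor
  · push_cast; linarith
  · push_cast; linarith

lemma hmap_Hmap (y : ℝ) : hmap (Hmap y) = y := by
  have ht := frac_mem y
  have h0 : Hmap y 0 = ι.symm (⌈y⌉ - 1) := rfl
  have htail : (fun n => Hmap y (n+1)) = G (y - ((⌈y⌉ - 1 : ℤ) : ℝ)) := rfl
  rw [hmap, h0, htail, Equiv.apply_symm_apply, g_G ht]
  push_cast; ring

lemma ceil_hmap (x : ℕ → ℕ) : ⌈hmap x⌉ = ι (x 0) + 1 := by
  have hg := g_mem (fun n => x (n+1))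
  rw [hmap, add_comm, Int.ceil_add_intCast]
  have : ⌈g (fun n => x (n+1))⌉ = 1 := by
    rw [Int.ceil_eq_iff]
    constructor
    · push_cast; linarith [hg.1]
    · push_cast; linarith [hg.2]
  omega

lemma Hmap_hmap (x : ℕ → ℕ) : Hmap (hmap x) = x := by
  have hc := ceil_hmap x
  have hfrac : hmap x - ((⌈hmap x⌉ - 1 : ℤ) : ℝ) = g (fun n => x (n+1)) := by
    rw [hc, hmap]; push_cast; ring
  funext k
  cases k with
  | zero =>
    show ι.symm (⌈hmap x⌉ - 1) = x 0
    rw [hc]; simp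
  | succ j =>
    show G (hmap x - ((⌈hmap x⌉ - 1 : ℤ) : ℝ)) j = x (j+1)
    rw [hfrac, G_g]

lemma hmap_bijective : Function.Bijective hmap :=
  Function.bijective_iff_has_inverse.mpr ⟨Hmap, Hmap_hmap, hmap_Hmap⟩

lemma continuous_hmap : Continuous hmap := by
  apply Continuous.add
  · exact (continuous_of_discreteTopology (f := fun m : ℕ => ((ι m : ℤ) : ℝ))).comp
      (continuous_apply 0)
  · exact continuous_g.comp (continuous_pi fun n => continuous_apply (n+1))

lemma invFun_hmap : Function.invFun hmap = Hmap := by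
  funext y
  apply hmap_bijective.injective
  rw [Function.invFun_eq ⟨Hmap y, hmap_Hmap y⟩, hmap_Hmap]

lemma ceil_loc {y : ℝ} (hd : y ∉ Dy) : ∀ᶠ y' in nhds y, ⌈y'⌉ = ⌈y⌉ := by
  have hne : y ≠ (⌈y⌉ : ℝ) := fun he => hd (he ▸ int_mem_Dy ⌈y⌉)
  have h1 : ((⌈y⌉ - 1 : ℤ) : ℝ) < y := by
    have := Int.ceil_lt_add_one y; push_cast; linarith
  have h2 : y < (⌈y⌉ : ℝ) := lt_of_le_of_ne (Int.le_ceil y) hne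
  filter_upwards [Ioo_mem_nhds h1 h2] with y' hy'
  rw [Int.ceil_eq_iff]
  constructor
  · have := hy'.1; push_cast at this ⊢; linarith
  · exact hy'.2.le

lemma Hmap_continuousAt {y : ℝ} (hd : y ∉ Dy) : ContinuousAt Hmap y := by
  have hceil := ceil_loc hd
  have ht : y - ((⌈y⌉ - 1 : ℤ) : ℝ) ∈ Ioc (0:ℝ) 1 := frac_mem y
  have htd : y - ((⌈y⌉ - 1 : ℤ) : ℝ) ∉ Dy := by
    intro h
    apply hd
    apply Dy_int_shift (-(⌈y⌉ - 1))
    have he : y + ((-(⌈y⌉ - 1) : ℤ) : ℝ) = y - ((⌈y⌉ - 1 : ℤ) : ℝ) := by push_cast; ring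
    rwa [he]
  apply continuousAt_pi.mpr
  intro k
  cases k with
  | zero =>
    apply continuousAt_const.congr
    filter_upwards [hceil] with y' hy'
    show Hmap y 0 = Hmap y' 0
    show ι.symm (⌈y⌉ - 1) = ι.symm (⌈y'⌉ - 1)
    rw [hy']
  | succ j =>
    have hsub : ContinuousAt (fun y' : ℝ => y' - ((⌈y⌉ - 1 : ℤ) : ℝ)) y := by fun_prop
    have hG := hsub.eventually (G_loc ht htd j)
    apply continuousAt_const.congr
    filter_upwards [hceil, hG] with y' h1 h2
    show Hmap y (j+1) = Hmap y' (j+1)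
    show G (y - ((⌈y⌉ - 1 : ℤ) : ℝ)) j = G (y' - ((⌈y'⌉ - 1 : ℤ) : ℝ)) j
    rw [h1, h2]

lemma Dy_eq_range : Dy = Set.range (fun p : ℤ × ℕ => (p.1 : ℝ) / 2^p.2) := by
  ext y
  constructor
  · rintro ⟨z, n, hz⟩; exact ⟨(z, n), hz.symm⟩
  · rintro ⟨⟨z, n⟩, hz⟩; exact ⟨z, n, hz.symm⟩

lemma exists_enum : ∃ e : ℕ → ℝ, Function.Injective e ∧ Set.range e = Dy := by
  have hc : Countable ↥Dy := by
    rw [Dy_eq_range]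
    exact (Set.countable_range _).to_subtype
  have hi : Infinite ↥Dy := by
    apply Infinite.of_injective (fun z : ℤ => (⟨(z:ℝ), int_mem_Dy z⟩ : ↥Dy))
    intro a b hab
    have : ((a:ℝ)) = ((b:ℝ)) := congrArg Subtype.val hab
    exact_mod_cast this
  obtain ⟨den⟩ := nonempty_denumerable ↥Dy
  refine ⟨fun n => ((Denumerable.eqv ↥Dy).symm n : ℝ), ?_, ?_⟩
  · intro a b hab
    have : (Denumerable.eqv ↥Dy).symm a = (Denumerable.eqv ↥Dy).symm b :=
      Subtype.val_injective hab
    simpa using (Denumerable.eqv ↥Dy).symm.injective this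
  · have : Set.range (fun n => (((Denumerable.eqv ↥Dy).symm n : ↥Dy) : ℝ))
        = Subtype.val '' Set.range ((Denumerable.eqv ↥Dy).symm) := by
      rw [← Set.range_comp]; rfl
    rw [this, Equiv.range_eq_univ, Set.image_univ, Subtype.range_coe]

end
end L32

section SigmaHelpers

variable {X : Type*} [TopologicalSpace X]

lemma ord_one_lt_two : (1 : Ordinal.{0}) < 2 := by norm_num

lemma ord_one_lt_three : (1 : Ordinal.{0}) < 3 := by norm_num

lemma ord_two_lt_three : (2 : Ordinal.{0}) < 3 := by
  have : ((2:ℕ):Ordinal) < ((3:ℕ):Ordinal) := by exact_mod_cast (by norm_num : (2:ℕ) < 3)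
  simpa using this

lemma sigma_diff {α β : Ordinal.{0}} (hβ : β < α) {A B : Set X}
    (hA : SigmaSet X β A) (hB : SigmaSet X β B) : SigmaSet X α (A \ B) := by
  have h := SigmaSet.iUnion α (fun _ : ℕ => β) (fun _ => A) (fun _ => B)
    (fun _ => hβ) (fun _ => hA) (fun _ => hB)
  rwa [Set.iUnion_const] at h

lemma sigma_open {α : Ordinal.{0}} (hα : 1 < α) {s : Set X} (hs : IsOpen s) :
    SigmaSet X α s := by
  have h := sigma_diff hα (SigmaSet.isOpen hs) (SigmaSet.isOpen isOpen_empty)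
  simpa using h

lemma sigma_closed {α : Ordinal.{0}} (hα : 1 < α) {s : Set X} (hs : IsClosed s) :
    SigmaSet X α s := by
  have h := sigma_diff hα (SigmaSet.isOpen isOpen_univ) (SigmaSet.isOpen hs.isOpen_compl)
  simpa [Set.diff_compl] using h

lemma sigma_fsigma {α : Ordinal.{0}} (hα : 1 < α) (f : ℕ → Set X)
    (hf : ∀ n, IsClosed (f n)) : SigmaSet X α (⋃ n, f n) := by
  have h := SigmaSet.iUnion α (fun _ : ℕ => 1) (fun _ => Set.univ) (fun n => (f n)ᶜ)
    (fun _ => hα) (fun _ => SigmaSet.isOpen isOpen_univ)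
    (fun n => SigmaSet.isOpen (hf n).isOpen_compl)
  simpa [Set.diff_compl] using h

end SigmaHelpers

theorem exists_level32_iso_real' : ∃ h : (ℕ → ℕ) → ℝ, IsLevel32Iso h := by
  classical
  obtain ⟨e, he_inj, he_range⟩ := L32.exists_enum
  refine ⟨L32.hmap, L32.hmap_bijective, ?_, ?_⟩
  · -- domain partition: univ, ∅, ∅, ...
    refine ⟨fun i => Nat.casesOn i Set.univ (fun _ => (∅ : Set (ℕ → ℕ))), ⟨?_, ?_⟩, ?_⟩
    · apply Set.eq_univ_of_forall
      intro x
      exact Set.mem_iUnion.mpr ⟨0, Set.mem_univ x⟩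
    · intro i j hij
      rcases i with _ | i
      · rcases j with _ | j
        · exact absurd rfl hij
        · simp [Function.onFun]
      · simp [Function.onFun]
    · intro i
      rcases i with _ | i
      · refine ⟨⟨sigma_open ord_one_lt_two isOpen_univ, ?_⟩, L32.continuous_hmap.continuousOn⟩
        show SigmaSet (ℕ → ℕ) 2 (Set.univ)ᶜ
        rw [Set.compl_univ]
        exact sigma_open ord_one_lt_two isOpen_empty
      · refine ⟨⟨sigma_open ord_one_lt_two isOpen_empty, ?_⟩, continuousOn_empty _⟩
        show SigmaSet (ℕ → ℕ) 2 (∅ : Set (ℕ → ℕ))ᶜ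
        rw [Set.compl_empty]
        exact sigma_open ord_one_lt_two isOpen_univ
  · -- range partition: Dyᶜ, {e 0}, {e 1}, ...
    have hDy2 : SigmaSet ℝ 2 L32.Dy := by
      have : L32.Dy = ⋃ n, {e n} := by rw [← he_range, Set.range_eq_iUnion]
      rw [this]
      exact sigma_fsigma ord_one_lt_two _ (fun n => isClosed_singleton)
    have hDy3 : SigmaSet ℝ 3 L32.Dy := by
      have : L32.Dy = ⋃ n, {e n} := by rw [← he_range, Set.range_eq_iUnion]
      rw [this]
      exact sigma_fsigma ord_one_lt_three _ (fun n => isClosed_singleton)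
    refine ⟨fun i => Nat.casesOn i L32.Dyᶜ (fun j => {e j}), ⟨?_, ?_⟩, ?_⟩
    · apply Set.eq_univ_of_forall
      intro y
      rw [Set.mem_iUnion]
      by_cases hy : y ∈ L32.Dy
      · rw [← he_range] at hy
        obtain ⟨j, hj⟩ := hy
        refine ⟨j + 1, ?_⟩
        show y ∈ ({e j} : Set ℝ)
        exact hj.symm
      · refine ⟨0, ?_⟩
        show y ∈ L32.Dyᶜ
        exact hy
    · intro i j hij
      have key : ∀ a b : ℕ, a ≠ b →
          Disjoint ((fun i => (Nat.casesOn i L32.Dyᶜ (fun j => ({e j} : Set ℝ)) : Set ℝ)) a)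
            ((fun i => (Nat.casesOn i L32.Dyᶜ (fun j => ({e j} : Set ℝ)) : Set ℝ)) b) := by
        intro a b hab
        rcases a with _ | a
        · rcases b with _ | b
          · exact absurd rfl hab
          · rw [Set.disjoint_left]
            rintro z hz rfl
            exact hz (he_range ▸ Set.mem_range_self b)
        · rcases b with _ | b
          · rw [Set.disjoint_right]
            rintro z hz rfl
            exact hz (he_range ▸ Set.mem_range_self a)
          · rw [Set.disjoint_singleton]
            intro hab'
            exact hab (by rw [he_inj hab'])
      exact key i j hij
    · intro i
      rcases i with _ | i
      · refine ⟨⟨?_, ?_⟩, ?_⟩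
        · have : L32.Dyᶜ = Set.univ \ L32.Dy := by rw [Set.compl_eq_univ_diff]
          rw [this]
          exact sigma_diff ord_two_lt_three (sigma_open ord_one_lt_two isOpen_univ) hDy2
        · show SigmaSet ℝ 3 (L32.Dyᶜ)ᶜ
          rw [compl_compl]
          exact hDy3
        · rw [L32.invFun_hmap]
          intro y hy
          exact (L32.Hmap_continuousAt hy).continuousWithinAt
      · refine ⟨⟨sigma_closed ord_one_lt_three isClosed_singleton, ?_⟩, ?_⟩
        · show SigmaSet ℝ 3 ({e i} : Set ℝ)ᶜ
          exact sigma_open ord_one_lt_three isOpen_compl_singleton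
        · intro y hy
          rw [Set.mem_singleton_iff] at hy
          subst hy
          exact continuousWithinAt_singleton

/-- There is a level `3/2` Borel isomorphism from Baire space onto the real line. -/
theorem exists_level32_iso_real : ∃ h : (ℕ → ℕ) → ℝ, IsLevel32Iso h :=
  exists_level32_iso_real'
end
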